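/- Let L : B → B*, B ↦ B*, be a linking between pre-matroids on a finite set X. Suppose S is an almost-basis of B, A is an almost-basis of B*, x, y ∈ U(S) with x ≠ y, and (S ∪ {x})* = A ∪ {y}. Then the set D = A ∪ {y} satisfies: τ_{xy}(D) ∈ B* and exactly one of x, y lies in D, where τ_{xy} is the transposition of x and y. -/

import Mathlib

open Finset

variable {α : Type*}

def ExchangeProperty [DecidableEq α] (B : Finset (Finset α)) : Prop :=
  ∀ B1 ∈ B, ∀ B2 ∈ B, ∀ x ∈ B1 \ B2, ∃ y ∈ B2 \ B1, insert y (B1.erase x) ∈ B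

def IsMatroid [DecidableEq α] (B : Finset (Finset α)) : Prop :=
  B.Nonempty ∧ ExchangeProperty B

def AlmostBasis [DecidableEq α] (B : Finset (Finset α)) (A : Finset α) : Prop :=
  ∃ B0 ∈ B, ∃ x ∈ B0, A = B0.erase x

def OverBasis [DecidableEq α] (B : Finset (Finset α)) (Q : Finset α) : Prop :=
  ∃ B0 ∈ B, ∃ y, y ∉ B0 ∧ Q = insert y B0

def Indep [DecidableEq α] (B : Finset (Finset α)) (S : Finset α) : Prop :=
  ∃ B0 ∈ B, S ⊆ B0

def IsCircuit [DecidableEq α] (B : Finset (Finset α)) (C : Finset α) : Prop :=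
  ¬ Indep B C ∧ ∀ x ∈ C, Indep B (C.erase x)

def USet [DecidableEq α] [Fintype α] (B : Finset (Finset α)) (D : Finset α) : Finset α :=
  Finset.univ.filter fun x => x ∉ D ∧ insert x D ∈ B

def CSet [DecidableEq α] (B : Finset (Finset α)) (Q : Finset α) : Finset α :=
  Q.filter fun x => Q.erase x ∈ B

def IsLinking [DecidableEq α] (B Bs : Finset (Finset α)) (L : Finset α → Finset α) : Prop :=
  Set.BijOn L ↑B ↑Bs ∧
  ∀ B0 ∈ B, ∀ a b : α, a ≠ b →
    (B0.image (Equiv.swap a b) ∈ B →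
      (L B0).image (Equiv.swap a b) ∈ Bs ∧
      (L B0).image (Equiv.swap a b) = L (B0.image (Equiv.swap a b))) ∧
    ((L B0).image (Equiv.swap a b) ∈ Bs →
      B0.image (Equiv.swap a b) ∈ B ∧
      (L B0).image (Equiv.swap a b) = L (B0.image (Equiv.swap a b)))

namespace Finset

variable [DecidableEq α]

theorem image_swap_insert_of_notMem {s : Finset α} {a b : α} (ha : a ∉ s) (hb : b ∉ s) :
    (insert a s).image (Equiv.swap a b) = insert b s := by
  rw [image_insert, Equiv.swap_apply_left]
  refine congrArg _ ((image_congr fun c hc => ?_).trans image_id)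
  exact Equiv.swap_apply_of_ne_of_ne (ne_of_mem_of_not_mem hc ha) (ne_of_mem_of_not_mem hc hb)

theorem image_swap_eq_self_of_mem {s : Finset α} {a b : α} (ha : a ∈ s) (hb : b ∈ s) :
    s.image (Equiv.swap a b) = s := by
  refine eq_of_subset_of_card_le (fun c hc => ?_) (card_image_of_injective _ (Equiv.injective _)).ge
  obtain ⟨d, hd, rfl⟩ := mem_image.1 hc
  rw [Equiv.swap_apply_def]
  split_ifs <;> assumption

end Finset

@[simp]
theorem mem_USet [DecidableEq α] [Fintype α] {B : Finset (Finset α)} {D : Finset α} {x : α} :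
    x ∈ USet B D ↔ x ∉ D ∧ insert x D ∈ B := by
  simp [USet]

namespace IsLinking

variable [DecidableEq α] {B Bs : Finset (Finset α)} {L : Finset α → Finset α}

theorem image_swap_mem (hL : IsLinking B Bs L) {B₀ : Finset α} (hB₀ : B₀ ∈ B) {a b : α}
    (hab : a ≠ b) (hswap : B₀.image (Equiv.swap a b) ∈ B) :
    (L B₀).image (Equiv.swap a b) ∈ Bs :=
  ((hL.2 B₀ hB₀ a b hab).1 hswap).1

theorem image_swap_eq (hL : IsLinking B Bs L) {B₀ : Finset α} (hB₀ : B₀ ∈ B) {a b : α}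
    (hab : a ≠ b) (hswap : B₀.image (Equiv.swap a b) ∈ B) :
    (L B₀).image (Equiv.swap a b) = L (B₀.image (Equiv.swap a b)) :=
  ((hL.2 B₀ hB₀ a b hab).1 hswap).2

end IsLinking

theorem xy_flip_general [DecidableEq α] [Fintype α]
    (B Bs : Finset (Finset α))
    (L : Finset α → Finset α) (hL : IsLinking B Bs L)
    (S A : Finset α)
    (x y : α) (hx : x ∈ USet B S) (hy : y ∈ USet B S) (hxy : x ≠ y)
    (hLx : L (insert x S) = insert y A) :
    (insert y A).image (Equiv.swap x y) ∈ Bs ∧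
      Xor' (x ∈ insert y A) (y ∈ insert y A) := by
  obtain ⟨hxS, hxB⟩ := mem_USet.1 hx
  obtain ⟨hyS, hyB⟩ := mem_USet.1 hy
  have hswap : (insert x S).image (Equiv.swap x y) ∈ B := by
    rwa [image_swap_insert_of_notMem hxS hyS]
  refine ⟨hLx ▸ hL.image_swap_mem hxB hxy hswap, Or.inr ⟨mem_insert_self y A, fun hxA => ?_⟩⟩
  -- If x were in L(S + x) as well, the swap would fix it, and L would identify S + x with S + y.
  have hLeq : L (insert x S) = L (insert y S) := by
    rw [← image_swap_insert_of_notMem hxS hyS, ← hL.image_swap_eq hxB hxy hswap, hLx,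
      image_swap_eq_self_of_mem hxA (mem_insert_self y A)]
  have hSeq : insert x S = insert y S := hL.1.injOn hxB hyB hLeq
  exact (mem_insert.1 (hSeq ▸ mem_insert_self x S)).elim hxy hxS

theorem xy_flip [DecidableEq α] [Fintype α]
    (B Bs : Finset (Finset α)) (hB : B.Nonempty) (hBs : Bs.Nonempty)
    (L : Finset α → Finset α) (hL : IsLinking B Bs L)
    (S A : Finset α) (hS : AlmostBasis B S) (hA : AlmostBasis Bs A)
    (x y : α) (hx : x ∈ USet B S) (hy : y ∈ USet B S) (hxy : x ≠ y)
    (hLx : L (insert x S) = insert y A) :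
    (insert y A).image (Equiv.swap x y) ∈ Bs ∧
      Xor' (x ∈ insert y A) (y ∈ insert y A) :=
  xy_flip_general B Bs L hL S A x y hx hy hxy hLx
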